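/- arXiv:2509.14357 — 3 statements merged into one kernel-verified Lean document; each statement's English description precedes it below -/
import Mathlib

section
/- Let q, n, w_n be positive integers with w_n ≤ q, and let δ = 2(q - w_n). Define C_k = (2w_k + nq - kδ, kδ) for positive integers w_k with w_n ≤ w_k ≤ q and indices 1 ≤ k ≤ n. Then for any distinct indices k ≠ k', dist₁(C_k, C_{k'}) ≥ 2δ = 4(q - w_n). -/
/-- L1 (Manhattan) distance on ℝ². -/
def dist1 (p q : ℝ × ℝ) : ℝ := |p.1 - q.1| + |p.2 - q.2|

lemma stmt6_aux (n q : ℕ) (w : ℕ → ℕ)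
    (hn : 0 < n)
    (hwq : ∀ k, 1 ≤ k → k ≤ n → w k ≤ q)
    (hanti : ∀ a b, 1 ≤ a → a ≤ b → b ≤ n → w b ≤ w a)
    (δ : ℝ) (hδ : δ = 2 * ((q : ℝ) - w n))
    (C : ℕ → ℝ × ℝ)
    (hC : ∀ k, C k = (2 * (w k : ℝ) + n * q - k * δ, (k : ℝ) * δ))
    (k k' : ℕ) (hk : 1 ≤ k) (hk2' : k' ≤ n)
    (hlt : k < k') :
    dist1 (C k) (C k') ≥ 2 * δ := by
  have hδ0 : 0 ≤ δ := by
    have := hwq n hn le_rfl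
    rw [hδ]
    have : (w n : ℝ) ≤ q := by exact_mod_cast this
    linarith
  have hw : (w k' : ℝ) ≤ w k := by
    exact_mod_cast hanti k k' hk (le_of_lt hlt) hk2'
  have hm : (1 : ℝ) ≤ (k' : ℝ) - k := by
    have : k + 1 ≤ k' := hlt
    have : (k : ℝ) + 1 ≤ k' := by exact_mod_cast this
    linarith
  have hmul : δ ≤ ((k' : ℝ) - k) * δ := le_mul_of_one_le_left hδ0 hm
  rw [hC k, hC k', dist1]
  simp only
  have h1 := le_abs_self (2 * (w k : ℝ) + n * q - k * δ - (2 * (w k' : ℝ) + n * q - k' * δ))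
  have h2 := neg_abs_le ((k : ℝ) * δ - (k' : ℝ) * δ)
  linarith

theorem stmt6 (n q : ℕ) (w : ℕ → ℕ)
    (hn : 0 < n) (hq : 0 < q)
    (hwpos : ∀ k, 1 ≤ k → k ≤ n → 1 ≤ w k)
    (hwq : ∀ k, 1 ≤ k → k ≤ n → w k ≤ q)
    (hanti : ∀ a b, 1 ≤ a → a ≤ b → b ≤ n → w b ≤ w a)
    (δ : ℝ) (hδ : δ = 2 * ((q : ℝ) - w n))
    (C : ℕ → ℝ × ℝ)
    (hC : ∀ k, C k = (2 * (w k : ℝ) + n * q - k * δ, (k : ℝ) * δ))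
    (k k' : ℕ) (hk : 1 ≤ k) (hk' : k ≤ n) (hk2 : 1 ≤ k') (hk2' : k' ≤ n)
    (hkk : k ≠ k') :
    dist1 (C k) (C k') ≥ 2 * δ := by
  have hcomm : ∀ p q : ℝ × ℝ, dist1 p q = dist1 q p := by
    intro p q; unfold dist1; rw [abs_sub_comm, abs_sub_comm p.2]
  rcases lt_or_gt_of_ne hkk with h | h
  · exact stmt6_aux n q w hn hwq hanti δ hδ C hC k k' hk hk2' h
  · rw [hcomm]
    exact stmt6_aux n q w hn hwq hanti δ hδ C hC k' k hk2 hk' h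
end

section
/- With ε = 1/n, L = (2+n)q, integers n ≥ 2, q ≥ 1, and u_i + v_j + w_k = q for positive integers u_i, v_j, w_k ≤ q: the sum dist₁(0, A_i) + dist₁(A_i, B_j) + dist₁(B_j, B'_i) equals L, where A_i = (u_i - iε, iε), B_j = (-v_j + jε, -jε), B'_i = (-(L-2u_i)+2-iε, -2+iε), and 0 is the origin. -/
theorem stmt14 (n q i j u v w : ℕ) (hn : 2 ≤ n) (hq : 1 ≤ q)
    (hi : 1 ≤ i) (hi' : i ≤ n) (hj : 1 ≤ j) (hj' : j ≤ n)
    (hu : 1 ≤ u) (huq : u ≤ q) (hv : 1 ≤ v) (hvq : v ≤ q) (hw : 1 ≤ w) (hwq : w ≤ q)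
    (hsum : u + v + w = q)
    (ε : ℝ) (hε : ε = 1 / n) (L : ℝ) (hL : L = (2 + n) * q)
    (A B B' : ℝ × ℝ)
    (hA : A = ((u : ℝ) - i * ε, (i : ℝ) * ε))
    (hB : B = (-(v : ℝ) + j * ε, -((j : ℝ) * ε)))
    (hB' : B' = (-(L - 2 * u) + 2 - i * ε, -2 + i * ε)) :
    dist1 (0, 0) A + dist1 A B + dist1 B B' = L := by
  subst hA hB hB' hε hL
  have hn0 : (0:ℝ) < n := by positivity
  have hnR : (2:ℝ) ≤ n := by exact_mod_cast hn
  have hiR : (1:ℝ) ≤ i := by exact_mod_cast hi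
  have hiR' : (i:ℝ) ≤ n := by exact_mod_cast hi'
  have hjR : (1:ℝ) ≤ j := by exact_mod_cast hj
  have hjR' : (j:ℝ) ≤ n := by exact_mod_cast hj'
  have huR : (1:ℝ) ≤ u := by exact_mod_cast hu
  have hvR : (1:ℝ) ≤ v := by exact_mod_cast hv
  have hqR : (1:ℝ) ≤ q := by exact_mod_cast hq
  have hsumR : (u:ℝ) + v + w = q := by exact_mod_cast hsum
  have hwR : (1:ℝ) ≤ w := by exact_mod_cast hw
  have hie : (i:ℝ) * (1/n) ≤ 1 := by
    rw [mul_one_div, div_le_one hn0]; exact hiR'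
  have hje : (j:ℝ) * (1/n) ≤ 1 := by
    rw [mul_one_div, div_le_one hn0]; exact hjR'
  have hie0 : (0:ℝ) ≤ (i:ℝ) * (1/n) := by positivity
  have hje0 : (0:ℝ) ≤ (j:ℝ) * (1/n) := by positivity
  simp only [dist1]
  rw [abs_of_nonpos (by linarith), abs_of_nonpos (by linarith),
      abs_of_nonneg (by linarith), abs_of_nonneg (by linarith),
      abs_of_nonneg (by nlinarith), abs_of_nonneg (by linarith)]
  ring
end

section
/- In ℝ² with L1 distance: if P₀ ≤ P₁ ≤ P₂ componentwise and Q₁, Q₂ are two incomparable points (neither Q₁ ≤ Q₂ nor Q₂ ≤ Q₁ componentwise) both lying in the rectangle spanned by P₀ and P₂, then dist₁(P₀,Q₁) + dist₁(Q₁,Q₂) + dist₁(Q₂,P₂) > dist₁(P₀,P₂). -/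
theorem stmt18 (P₀ P₁ P₂ Q₁ Q₂ : ℝ × ℝ)
    (h01 : P₀.1 ≤ P₁.1 ∧ P₀.2 ≤ P₁.2) (h12 : P₁.1 ≤ P₂.1 ∧ P₁.2 ≤ P₂.2)
    (hinc : ¬(Q₁.1 ≤ Q₂.1 ∧ Q₁.2 ≤ Q₂.2) ∧ ¬(Q₂.1 ≤ Q₁.1 ∧ Q₂.2 ≤ Q₁.2))
    (hQ₁ : P₀.1 ≤ Q₁.1 ∧ Q₁.1 ≤ P₂.1 ∧ P₀.2 ≤ Q₁.2 ∧ Q₁.2 ≤ P₂.2)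
    (hQ₂ : P₀.1 ≤ Q₂.1 ∧ Q₂.1 ≤ P₂.1 ∧ P₀.2 ≤ Q₂.2 ∧ Q₂.2 ≤ P₂.2) :
    dist1 P₀ Q₁ + dist1 Q₁ Q₂ + dist1 Q₂ P₂ > dist1 P₀ P₂ := by
  obtain ⟨h1, h2⟩ := hinc
  obtain ⟨a1, a2, a3, a4⟩ := hQ₁
  obtain ⟨b1, b2, b3, b4⟩ := hQ₂
  push_neg at h1 h2
  simp only [dist1]
  rcases le_or_gt Q₁.1 Q₂.1 with hx | hx
  · have hy : Q₂.2 < Q₁.2 := h1 hx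
    have hx' : Q₁.1 < Q₂.1 := lt_of_not_ge fun h => absurd (h2 h) (not_lt.2 hy.le)
    rw [abs_of_nonpos (by linarith), abs_of_nonpos (by linarith), abs_of_nonpos (by linarith),
      abs_of_nonneg (by linarith), abs_of_nonpos (by linarith), abs_of_nonpos (by linarith),
      abs_of_nonpos (by linarith), abs_of_nonpos (by linarith)]
    linarith
  · have hy : Q₁.2 < Q₂.2 := h2 hx.le
    rw [abs_of_nonpos (by linarith), abs_of_nonpos (by linarith), abs_of_nonneg (by linarith),
      abs_of_nonpos (by linarith), abs_of_nonpos (by linarith), abs_of_nonpos (by linarith),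
      abs_of_nonpos (by linarith), abs_of_nonpos (by linarith)]
    linarith
end
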